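/- Fix n ≥ 1 and a symmetric matrix C_e ∈ ℝ^{n×n}; for orthogonal M let A(M) := Mᵀ C_e M, D(M) := diag(A(M)), Ω(M) := A(M)D(M) − D(M)A(M), and f(M) := (1/2)‖A(M) − D(M)‖_F². Then for every orthogonal M: (i) ‖Ω(M)‖_F² ≤ 8‖C_e‖₂² f(M); and (ii) if δ > 0 satisfies |A(M)_{ii} − A(M)_{jj}| ≥ δ for all i ≠ j, then ‖Ω(M)‖_F² ≥ 2δ² f(M). -/

import Mathlib

open Matrix

/-- The diagonal matrix whose diagonal agrees with `X`. -/
noncomputable def diagPart {n : ℕ} (X : Matrix (Fin n) (Fin n) ℝ) :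
    Matrix (Fin n) (Fin n) ℝ :=
  Matrix.diagonal (fun i => X i i)

/-- Frobenius norm of a real square matrix. -/
noncomputable def frobNorm {n : ℕ} (X : Matrix (Fin n) (Fin n) ℝ) : ℝ :=
  Real.sqrt (∑ i, ∑ j, (X i j) ^ 2)

/-- Spectral (ℓ²-operator) norm of a real square matrix. -/
noncomputable def specNorm {n : ℕ} (X : Matrix (Fin n) (Fin n) ℝ) : ℝ :=
  ‖LinearMap.toContinuousLinearMap (Matrix.toEuclideanLin X)‖

/-- Rotated covariance `A(M) = Mᵀ C_e M`. -/
noncomputable def rotA {n : ℕ} (Ce M : Matrix (Fin n) (Fin n) ℝ) :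
    Matrix (Fin n) (Fin n) ℝ := Mᵀ * Ce * M

/-- The commutator generator `Ω(M) = A D − D A`. -/
noncomputable def genOmega {n : ℕ} (Ce M : Matrix (Fin n) (Fin n) ℝ) :
    Matrix (Fin n) (Fin n) ℝ :=
  rotA Ce M * diagPart (rotA Ce M) - diagPart (rotA Ce M) * rotA Ce M

/-- The diagonalization objective `f(M) = (1/2)‖off(A(M))‖_F²`. -/
noncomputable def objF {n : ℕ} (Ce M : Matrix (Fin n) (Fin n) ℝ) : ℝ :=
  (1 / 2) * frobNorm (rotA Ce M - diagPart (rotA Ce M)) ^ 2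

/-!
Entrywise `Ω_ij = (A_jj - A_ii) A_ij`, so `‖Ω‖_F²` is the sum of the squared off-diagonal
entries of `A` weighted by the squared diagonal gaps `(A_jj - A_ii)²`. Separation bounds these
gaps below by `δ²`; above, each diagonal entry `A_ii` is the Rayleigh quotient of `C_e` at the
unit column `i` of `M`, hence `|A_ii| ≤ ‖C_e‖₂` and every gap is at most `4‖C_e‖₂²`.
-/

section

variable {n : ℕ}

lemma frobNorm_sq (X : Matrix (Fin n) (Fin n) ℝ) :
    frobNorm X ^ 2 = ∑ i, ∑ j, X i j ^ 2 :=
  Real.sq_sqrt (by positivity)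

lemma sub_diagPart_apply (X : Matrix (Fin n) (Fin n) ℝ) (i j : Fin n) :
    (X - diagPart X) i j = if i = j then 0 else X i j := by
  by_cases h : i = j
  · subst h; simp [diagPart]
  · simp [diagPart, h]

lemma mul_diagPart_sub_diagPart_mul_apply (X : Matrix (Fin n) (Fin n) ℝ)
    (i j : Fin n) :
    (X * diagPart X - diagPart X * X) i j = (X j j - X i i) * (X - diagPart X) i j := by
  simp only [Matrix.sub_apply, diagPart, mul_diagonal, diagonal_mul]
  by_cases h : i = j
  · subst h; ring
  · rw [diagonal_apply_ne _ h]; ring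

lemma frobNorm_mul_diagPart_sub_diagPart_mul_sq (X : Matrix (Fin n) (Fin n) ℝ) :
    frobNorm (X * diagPart X - diagPart X * X) ^ 2 =
      ∑ i, ∑ j, (X j j - X i i) ^ 2 * (X - diagPart X) i j ^ 2 := by
  simp only [frobNorm_sq, mul_diagPart_sub_diagPart_mul_apply, mul_pow]

lemma frobNorm_mul_diagPart_sub_diagPart_mul_sq_le (X : Matrix (Fin n) (Fin n) ℝ)
    {c : ℝ} (hc : ∀ i j, i ≠ j → (X j j - X i i) ^ 2 ≤ c) :
    frobNorm (X * diagPart X - diagPart X * X) ^ 2 ≤ c * frobNorm (X - diagPart X) ^ 2 := by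
  rw [frobNorm_mul_diagPart_sub_diagPart_mul_sq, frobNorm_sq, Finset.mul_sum]
  refine Finset.sum_le_sum fun i _ => ?_
  rw [Finset.mul_sum]
  refine Finset.sum_le_sum fun j _ => ?_
  by_cases h : i = j
  · rw [sub_diagPart_apply, if_pos h]; simp
  · exact mul_le_mul_of_nonneg_right (hc i j h) (sq_nonneg _)

lemma le_frobNorm_mul_diagPart_sub_diagPart_mul_sq (X : Matrix (Fin n) (Fin n) ℝ)
    {c : ℝ} (hc : ∀ i j, i ≠ j → c ≤ (X j j - X i i) ^ 2) :
    c * frobNorm (X - diagPart X) ^ 2 ≤ frobNorm (X * diagPart X - diagPart X * X) ^ 2 := by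
  rw [frobNorm_mul_diagPart_sub_diagPart_mul_sq, frobNorm_sq, Finset.mul_sum]
  refine Finset.sum_le_sum fun i _ => ?_
  rw [Finset.mul_sum]
  refine Finset.sum_le_sum fun j _ => ?_
  by_cases h : i = j
  · rw [sub_diagPart_apply, if_pos h]; simp
  · exact mul_le_mul_of_nonneg_right (hc i j h) (sq_nonneg _)

lemma abs_dotProduct_mulVec_le_specNorm (C : Matrix (Fin n) (Fin n) ℝ)
    (v : Fin n → ℝ) : |v ⬝ᵥ C *ᵥ v| ≤ specNorm C * (v ⬝ᵥ v) := by
  set x : EuclideanSpace ℝ (Fin n) := WithLp.toLp 2 v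
  have hCx : ‖toEuclideanLin C x‖ ≤ specNorm C * ‖x‖ :=
    (LinearMap.toContinuousLinearMap (toEuclideanLin C)).le_opNorm x
  have hxx : ‖x‖ ^ 2 = v ⬝ᵥ v := by
    rw [← real_inner_self_eq_norm_sq]
    exact (EuclideanSpace.inner_toLp_toLp v v).trans (by simp)
  calc |v ⬝ᵥ C *ᵥ v| = |inner ℝ x (toEuclideanLin C x)| := by
        simp [x, EuclideanSpace.inner_toLp_toLp, dotProduct_comm]
    _ ≤ ‖x‖ * ‖toEuclideanLin C x‖ := abs_real_inner_le_norm _ _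
    _ ≤ ‖x‖ * (specNorm C * ‖x‖) := by gcongr
    _ = specNorm C * (v ⬝ᵥ v) := by rw [← hxx]; ring

lemma rotA_apply_self (C M : Matrix (Fin n) (Fin n) ℝ) (i : Fin n) :
    rotA C M i i = M.col i ⬝ᵥ C *ᵥ M.col i := by
  simp only [rotA, mul_apply, transpose_apply, dotProduct, mulVec, col_apply,
    Finset.sum_mul, Finset.mul_sum]
  rw [Finset.sum_comm]
  exact Finset.sum_congr rfl fun k _ => Finset.sum_congr rfl fun l _ => by ring

lemma abs_rotA_apply_self_le_specNorm (C : Matrix (Fin n) (Fin n) ℝ)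
    {M : Matrix (Fin n) (Fin n) ℝ} (hM : Mᵀ * M = 1) (i : Fin n) :
    |rotA C M i i| ≤ specNorm C := by
  have hcol : M.col i ⬝ᵥ M.col i = 1 := by
    simpa [mul_apply, dotProduct] using congrFun (congrFun hM i) i
  simpa [rotA_apply_self, hcol] using abs_dotProduct_mulVec_le_specNorm C (M.col i)

lemma sq_sub_rotA_apply_self_le (C : Matrix (Fin n) (Fin n) ℝ)
    {M : Matrix (Fin n) (Fin n) ℝ} (hM : Mᵀ * M = 1) (i j : Fin n) :
    (rotA C M j j - rotA C M i i) ^ 2 ≤ 4 * specNorm C ^ 2 := by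
  have hi := abs_rotA_apply_self_le_specNorm C hM i
  have hj := abs_rotA_apply_self_le_specNorm C hM j
  calc (rotA C M j j - rotA C M i i) ^ 2 = |rotA C M j j - rotA C M i i| ^ 2 := (sq_abs _).symm
    _ ≤ (2 * specNorm C) ^ 2 := by gcongr; exact (abs_sub _ _).trans (by linarith)
    _ = 4 * specNorm C ^ 2 := by ring

end

theorem spectral_sandwich_general {n : ℕ}
    (Ce M : Matrix (Fin n) (Fin n) ℝ) (hM : Mᵀ * M = 1) :
    frobNorm (genOmega Ce M) ^ 2 ≤ 8 * specNorm Ce ^ 2 * objF Ce M ∧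
    (∀ δ : ℝ, 0 < δ →
      (∀ i j : Fin n, i ≠ j → δ ≤ |rotA Ce M i i - rotA Ce M j j|) →
      2 * δ ^ 2 * objF Ce M ≤ frobNorm (genOmega Ce M) ^ 2) := by
  set A := rotA Ce M
  have hgap_le : ∀ i j, i ≠ j → (A j j - A i i) ^ 2 ≤ 4 * specNorm Ce ^ 2 :=
    fun i j _ => sq_sub_rotA_apply_self_le Ce hM i j
  refine ⟨?_, fun δ hδ hsep => ?_⟩
  · calc frobNorm (genOmega Ce M) ^ 2
          ≤ 4 * specNorm Ce ^ 2 * frobNorm (A - diagPart A) ^ 2 :=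
          frobNorm_mul_diagPart_sub_diagPart_mul_sq_le A hgap_le
      _ = 8 * specNorm Ce ^ 2 * objF Ce M := by rw [objF]; ring
  · have hgap_ge : ∀ i j, i ≠ j → δ ^ 2 ≤ (A j j - A i i) ^ 2 := fun i j hij => by
      rw [← sq_abs (A j j - A i i), abs_sub_comm]
      exact pow_le_pow_left₀ hδ.le (hsep i j hij) 2
    calc 2 * δ ^ 2 * objF Ce M = δ ^ 2 * frobNorm (A - diagPart A) ^ 2 := by rw [objF]; ring
      _ ≤ frobNorm (genOmega Ce M) ^ 2 :=
          le_frobNorm_mul_diagPart_sub_diagPart_mul_sq A hgap_ge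

/-- **Spectral sandwiching**: `2δ² f(M) ≤ ‖Ω(M)‖_F² ≤ 8‖C_e‖₂² f(M)` on the
spectrally separated domain. -/
theorem spectral_sandwich {n : ℕ} (hn : 1 ≤ n)
    (Ce M : Matrix (Fin n) (Fin n) ℝ) (hCe : Ceᵀ = Ce) (hM : Mᵀ * M = 1) :
    frobNorm (genOmega Ce M) ^ 2 ≤ 8 * specNorm Ce ^ 2 * objF Ce M ∧
    (∀ δ : ℝ, 0 < δ →
      (∀ i j : Fin n, i ≠ j → δ ≤ |rotA Ce M i i - rotA Ce M j j|) →
      2 * δ ^ 2 * objF Ce M ≤ frobNorm (genOmega Ce M) ^ 2) :=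
  spectral_sandwich_general Ce M hM
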